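/- If a quaternion matrix A is right invertible along quaternion matrices B and C, then the right inverse along B, C equals B(CAB)†C, where † denotes the Moore-Penrose inverse. -/
import Mathlib


open scoped Quaternion Matrix

noncomputable section

/-- `X` is the Moore-Penrose inverse of the quaternion matrix `M`. -/
def IsMP {m n : ℕ} (M : Matrix (Fin m) (Fin n) ℍ[ℝ]) (X : Matrix (Fin n) (Fin m) ℍ[ℝ]) : Prop :=
  M * X * M = M ∧ X * M * X = X ∧ (M * X)ᴴ = M * X ∧ (X * M)ᴴ = X * M

theorem right_inverse_along_eq {n1 n2 l k : ℕ}
    (A : Matrix (Fin n1) (Fin n2) ℍ[ℝ]) (B : Matrix (Fin n2) (Fin l) ℍ[ℝ])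
    (C : Matrix (Fin k) (Fin n1) ℍ[ℝ])
    (Z : Matrix (Fin n2) (Fin n1) ℍ[ℝ])
    (h1 : Z * A * B = B) (h2 : C * A * Z = C)
    (hX : ∃ X1 : Matrix (Fin l) (Fin n1) ℍ[ℝ], Z = B * X1)
    (hY : ∃ Y1 : Matrix (Fin n2) (Fin k) ℍ[ℝ], Z = Y1 * C)
    (M : Matrix (Fin l) (Fin k) ℍ[ℝ]) (hM : IsMP (C * A * B) M) :
    Z = B * M * C := by
  obtain ⟨X1, hX1⟩ := hX
  obtain ⟨Y1, hY1⟩ := hY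
  obtain ⟨hM1, -, -, -⟩ := hM
  have hZAZ : Z * A * Z = Z := by
    nth_rewrite 2 [hX1]
    rw [← Matrix.mul_assoc, h1, ← hX1]
  have hBWC : B * (X1 * A * Y1) * C = Z := by
    rw [← Matrix.mul_assoc B (X1 * A) Y1, ← Matrix.mul_assoc B X1 A, ← hX1,
        Matrix.mul_assoc (Z * A) Y1 C, ← hY1, hZAZ]
  have hB : B * (X1 * A * Y1) * (C * A * B) = B := by
    rw [← Matrix.mul_assoc _ (C * A) B, ← Matrix.mul_assoc _ C A, hBWC, h1]
  have hC : C * A * B * ((X1 * A * Y1) * C) = C := by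
    rw [Matrix.mul_assoc (C * A) B ((X1 * A * Y1) * C),
        ← Matrix.mul_assoc B (X1 * A * Y1) C, hBWC, h2]
  have key : B * M * C = Z := by
    rw [← hC, ← Matrix.mul_assoc (B * M) (C * A * B) ((X1 * A * Y1) * C),
        Matrix.mul_assoc B M (C * A * B)]
    nth_rewrite 1 [← hB]
    rw [Matrix.mul_assoc (B * (X1 * A * Y1)) (C * A * B) (M * (C * A * B)),
        ← Matrix.mul_assoc (C * A * B) M (C * A * B), hM1, hB,
        ← Matrix.mul_assoc B (X1 * A * Y1) C, hBWC]
  exact key.symm
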